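/- Let F be a field and L = ⊕_{g∈G} L_g a G-graded Lie algebra over F for G = (Z/2Z)^3, satisfying: (i) L_0 = 0 for the neutral element 0 of G; (ii) [L_g, L_h] = L_{g+h} for all distinct nonzero g, h ∈ G; (iii) whenever g, h, k generate G, there exist x ∈ L_g, y ∈ L_h, z ∈ L_k such that {[x,[y,z]], [y,[z,x]]} is linearly independent. Let ε: G×G → F be an admissible map, i.e. ε(g,g) = ε(0,g) = ε(g,0) = 0 for all g ∈ G. Then ε is a graded contraction of the grading (i.e. the product defined on homogeneous elements by [x,y]^ε = ε(g,h)[x,y] is a Lie bracket on L) if and only if: (a1)' ε(g,h) = ε(h,g) for all g, h ∈ G, and (a2)' ε(g,h+k)ε(h,k) = ε(k,g+h)ε(g,h) whenever g, h, k generate G. -/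

import Mathlib

/-!
On homogeneous elements `x ∈ L_g`, `y ∈ L_h`, `z ∈ L_k` the Jacobi identity of `L` turns the
contracted Jacobiator into
`(ε(g,h+k)ε(h,k) - ε(k,g+h)ε(g,h)) [x,[y,z]] + (ε(h,k+g)ε(k,g) - ε(k,g+h)ε(g,h)) [y,[z,x]]`.
When `g, h, k` generate `G`, hypothesis (iii) makes the two brackets independent, so the
contracted Jacobi identity is exactly (a2)' for `(g,h,k)` and its cyclic shift `(h,k,g)`. Every
other triple is degenerate (a zero degree, a repeated degree, or `g + h + k = 0`) and is killed by
admissibility, symmetry and `L_0 = 0`. Completing two distinct nonzero degrees to a generating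
triple, (iii) also gives `[L_g, L_h] ≠ 0`, which turns skew-symmetry of the contracted bracket into
symmetry of `ε`. Both identities are multilinear, so they extend from homogeneous elements to `L`.
-/

open Module

namespace GGA

section Multilinear

variable {ι R M N : Type*} [CommSemiring R] [AddCommMonoid M] [AddCommMonoid N] [Module R M]
  [Module R N] {p : ι → Submodule R M}

theorem linearMap_eq_zero_of_iSup_eq_top (hp : ⨆ i, p i = ⊤) {f : M →ₗ[R] N}
    (hf : ∀ i, ∀ x ∈ p i, f x = 0) : f = 0 := by
  refine LinearMap.ext_on (s := ⋃ i, p i) (by rw [← Submodule.iSup_eq_span, hp]) ?_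
  simp only [Set.EqOn, Set.mem_iUnion, SetLike.mem_coe, LinearMap.zero_apply,
    forall_exists_index]
  exact fun x i hx => hf i x hx

theorem bilinearMap_eq_zero_of_iSup_eq_top (hp : ⨆ i, p i = ⊤) {f : M →ₗ[R] M →ₗ[R] N}
    (hf : ∀ i j, ∀ x ∈ p i, ∀ y ∈ p j, f x y = 0) : f = 0 :=
  linearMap_eq_zero_of_iSup_eq_top hp fun i x hx =>
    linearMap_eq_zero_of_iSup_eq_top hp fun j y hy => hf i j x hx y hy

theorem trilinearMap_eq_zero_of_iSup_eq_top (hp : ⨆ i, p i = ⊤)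
    {f : M →ₗ[R] M →ₗ[R] M →ₗ[R] N}
    (hf : ∀ i j k, ∀ x ∈ p i, ∀ y ∈ p j, ∀ z ∈ p k, f x y z = 0) : f = 0 :=
  linearMap_eq_zero_of_iSup_eq_top hp fun i x hx =>
    bilinearMap_eq_zero_of_iSup_eq_top hp fun j k y hy z hz => hf i j k x hx y hy z hz

theorem isAlt_of_iSup_eq_top (hp : ⨆ i, p i = ⊤) {B : M →ₗ[R] M →ₗ[R] N}
    (hskew : ∀ i j, ∀ x ∈ p i, ∀ y ∈ p j, B x y + B y x = 0) (hB : ∀ i, ∀ x ∈ p i, B x x = 0) :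
    B.IsAlt := by
  have hskew' : B + B.flip = 0 := bilinearMap_eq_zero_of_iSup_eq_top hp hskew
  intro x
  refine Submodule.iSup_induction p (motive := fun x => B x x = 0) (hp ▸ Submodule.mem_top) hB
    (by simp) fun x y hx hy => ?_
  rw [LinearMap.map_add₂, map_add, map_add, hx, hy, zero_add, add_zero]
  simpa using LinearMap.ext_iff₂.1 hskew' x y

def jacobiator (B : M →ₗ[R] M →ₗ[R] M) : M →ₗ[R] M →ₗ[R] M →ₗ[R] M :=
  LinearMap.mk₂ R (fun x y => B x ∘ₗ B y + B y ∘ₗ B.flip x + B.flip (B x y))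
    (fun _ _ _ => by ext; simp only [map_add, LinearMap.add_apply, LinearMap.comp_apply,
      LinearMap.flip_apply]; abel)
    (fun _ _ _ => by ext; simp [smul_add])
    (fun _ _ _ => by ext; simp only [map_add, LinearMap.add_apply, LinearMap.comp_apply,
      LinearMap.flip_apply]; abel)
    (fun _ _ _ => by ext; simp [smul_add])

@[simp]
theorem jacobiator_apply (B : M →ₗ[R] M →ₗ[R] M) (x y z : M) :
    jacobiator B x y z = B x (B y z) + B y (B z x) + B z (B x y) :=
  rfl

end Multilinear

section ElementaryAbelian

variable {V : Type*} [AddCommGroup V] [Module (ZMod 2) V]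

theorem linearIndependent_of_ne {g h k : V} (hg : g ≠ 0) (hh : h ≠ 0) (hk : k ≠ 0)
    (hgh : g ≠ h) (hhk : h ≠ k) (hkg : k ≠ g) (hghk : g + h + k ≠ 0) :
    LinearIndependent (ZMod 2) ![g, h, k] := by
  rw [Fintype.linearIndependent_iff]
  intro c hc i
  simp only [Fin.sum_univ_three, Matrix.cons_val_zero, Matrix.cons_val_one,
    Matrix.cons_val_two, Matrix.head_cons, Matrix.tail_cons] at hc
  have h01 : ∀ a : ZMod 2, a = 0 ∨ a = 1 := by decide
  rcases h01 (c 0) with h0 | h0 <;> rcases h01 (c 1) with h1 | h1 <;>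
    rcases h01 (c 2) with h2 | h2 <;>
    simp only [h0, h1, h2, zero_smul, one_smul, zero_add, add_zero] at hc <;>
    first | (fin_cases i <;> assumption) |
      simp_all [add_eq_zero_iff_eq_neg, ZModModule.neg_eq_self]

theorem closure_eq_top_of_ne (hV : finrank (ZMod 2) V = 3) {g h k : V} (hg : g ≠ 0)
    (hh : h ≠ 0) (hk : k ≠ 0) (hgh : g ≠ h) (hhk : h ≠ k) (hkg : k ≠ g) (hghk : g + h + k ≠ 0) :
    AddSubgroup.closure {g, h, k} = ⊤ := by
  have hspan := (linearIndependent_of_ne hg hh hk hgh hhk hkg hghk).span_eq_top_of_card_eq_finrank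
    (by rw [hV, Fintype.card_fin])
  apply (AddSubgroup.toZModSubmodule 2).injective
  rw [map_top, eq_top_iff, ← hspan, Submodule.span_le, Set.range_subset_iff]
  intro i
  fin_cases i <;> exact AddSubgroup.subset_closure (by simp)

theorem closure_eq_top_or (hV : finrank (ZMod 2) V = 3) (g h k : V) :
    AddSubgroup.closure {g, h, k} = ⊤ ∨ g = 0 ∨ h = 0 ∨ k = 0 ∨ g = h ∨ h = k ∨ k = g ∨
      g + h + k = 0 := by
  by_contra! H
  obtain ⟨hgen, hg, hh, hk, hgh, hhk, hkg, hghk⟩ := H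
  exact hgen (closure_eq_top_of_ne hV hg hh hk hgh hhk hkg hghk)

theorem exists_closure_eq_top (hV : finrank (ZMod 2) V = 3) {g h : V} (hg : g ≠ 0) (hh : h ≠ 0)
    (hgh : g ≠ h) : ∃ k, AddSubgroup.closure {g, h, k} = ⊤ := by
  classical
  obtain ⟨k, hk⟩ : ∃ k, k ∉ Submodule.span (ZMod 2) {g, h} := by
    by_contra! hspan
    have := finrank_span_finset_le_card (R := ZMod 2) {g, h}
    rw [Finset.coe_pair, Set.finrank, Submodule.eq_top_iff'.2 hspan, finrank_top, hV] at this
    exact absurd (this.trans Finset.card_le_two) (by norm_num)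
  have hg' : g ∈ Submodule.span (ZMod 2) {g, h} := Submodule.subset_span (by simp)
  have hh' : h ∈ Submodule.span (ZMod 2) {g, h} := Submodule.subset_span (by simp)
  refine ⟨k, closure_eq_top_of_ne hV hg hh ?_ hgh ?_ ?_ fun hsum => hk ?_⟩
  · rintro rfl; exact hk (zero_mem _)
  · rintro rfl; exact hk hh'
  · rintro rfl; exact hk hg'
  · rw [eq_neg_of_add_eq_zero_right hsum, ZModModule.neg_eq_self]
    exact add_mem hg' hh'

end ElementaryAbelian

section Contraction

variable {G F L : Type*} [CommRing F] [LieRing L] [LieAlgebra F L] {ℒ : G → Submodule F L}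
  {ε : G → G → F} {B : L →ₗ[F] L →ₗ[F] L}

theorem apply_apply_eq_smul_lie_lie [Add G]
    (hgraded : ∀ g h, ∀ x ∈ ℒ g, ∀ y ∈ ℒ h, ⁅x, y⁆ ∈ ℒ (g + h))
    (hB : ∀ g h, ∀ x ∈ ℒ g, ∀ y ∈ ℒ h, B x y = ε g h • ⁅x, y⁆) {g h k : G} {x y z : L}
    (hx : x ∈ ℒ g) (hy : y ∈ ℒ h) (hz : z ∈ ℒ k) :
    B x (B y z) = (ε g (h + k) * ε h k) • ⁅x, ⁅y, z⁆⁆ := by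
  rw [hB h k y hy z hz, map_smul, hB g (h + k) x hx _ (hgraded h k y hy z hz), smul_smul,
    mul_comm]

theorem jacobiator_eq [Add G]
    (hgraded : ∀ g h, ∀ x ∈ ℒ g, ∀ y ∈ ℒ h, ⁅x, y⁆ ∈ ℒ (g + h))
    (hB : ∀ g h, ∀ x ∈ ℒ g, ∀ y ∈ ℒ h, B x y = ε g h • ⁅x, y⁆) {g h k : G} {x y z : L}
    (hx : x ∈ ℒ g) (hy : y ∈ ℒ h) (hz : z ∈ ℒ k) :
    jacobiator B x y z =
      (ε g (h + k) * ε h k - ε k (g + h) * ε g h) • ⁅x, ⁅y, z⁆⁆ +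
        (ε h (k + g) * ε k g - ε k (g + h) * ε g h) • ⁅y, ⁅z, x⁆⁆ := by
  have hZ : ⁅z, ⁅x, y⁆⁆ = -(⁅x, ⁅y, z⁆⁆ + ⁅y, ⁅z, x⁆⁆) :=
    eq_neg_of_add_eq_zero_right (lie_jacobi x y z)
  rw [jacobiator_apply, apply_apply_eq_smul_lie_lie hgraded hB hx hy hz,
    apply_apply_eq_smul_lie_lie hgraded hB hy hz hx,
    apply_apply_eq_smul_lie_lie hgraded hB hz hx hy, hZ]
  module

theorem lie_eq_zero_of_mem_same [AddCommGroup G] [Module (ZMod 2) G]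
    (hgraded : ∀ g h, ∀ x ∈ ℒ g, ∀ y ∈ ℒ h, ⁅x, y⁆ ∈ ℒ (g + h)) (h0 : ℒ 0 = ⊥) {g : G}
    {x y : L} (hx : x ∈ ℒ g) (hy : y ∈ ℒ g) : ⁅x, y⁆ = 0 := by
  simpa [ZModModule.add_self, h0] using hgraded g g x hx y hy

end Contraction

section RankThree

variable {V F L : Type*} [AddCommGroup V] [Module (ZMod 2) V] [Field F] [LieRing L]
  [LieAlgebra F L] {ℒ : V → Submodule F L} {ε : V → V → F} {B : L →ₗ[F] L →ₗ[F] L}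

theorem exists_lie_ne_zero (hV : finrank (ZMod 2) V = 3)
    (hindep : ∀ g h k : V, AddSubgroup.closure {g, h, k} = ⊤ →
      ∃ x ∈ ℒ g, ∃ y ∈ ℒ h, ∃ z ∈ ℒ k, LinearIndependent F ![⁅x, ⁅y, z⁆⁆, ⁅y, ⁅z, x⁆⁆])
    {g h : V} (hg : g ≠ 0) (hh : h ≠ 0) (hgh : g ≠ h) :
    ∃ x ∈ ℒ g, ∃ y ∈ ℒ h, ⁅x, y⁆ ≠ 0 := by
  obtain ⟨k, hk⟩ := exists_closure_eq_top hV hg hh hgh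
  obtain ⟨x, hx, y, hy, z, hz, hli⟩ := hindep g h k hk
  refine ⟨x, hx, y, hy, fun hxy => ?_⟩
  have hsum : (1 : F) • ⁅x, ⁅y, z⁆⁆ + (1 : F) • ⁅y, ⁅z, x⁆⁆ = 0 := by
    simpa [hxy] using lie_jacobi x y z
  exact one_ne_zero (hli.eq_zero_of_pair hsum).1

theorem contraction_symm_of_isAlt (hV : finrank (ZMod 2) V = 3)
    (hindep : ∀ g h k : V, AddSubgroup.closure {g, h, k} = ⊤ →
      ∃ x ∈ ℒ g, ∃ y ∈ ℒ h, ∃ z ∈ ℒ k, LinearIndependent F ![⁅x, ⁅y, z⁆⁆, ⁅y, ⁅z, x⁆⁆])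
    (hadm : ∀ g : V, ε g g = 0 ∧ ε 0 g = 0 ∧ ε g 0 = 0)
    (hB : ∀ g h, ∀ x ∈ ℒ g, ∀ y ∈ ℒ h, B x y = ε g h • ⁅x, y⁆) (halt : B.IsAlt) (g h : V) :
    ε g h = ε h g := by
  rcases eq_or_ne g 0 with rfl | hg
  · simp [hadm]
  rcases eq_or_ne h 0 with rfl | hh
  · simp [hadm]
  rcases eq_or_ne g h with rfl | hgh
  · rfl
  obtain ⟨x, hx, y, hy, hxy⟩ := exists_lie_ne_zero hV hindep hg hh hgh
  refine smul_left_injective F hxy ?_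
  have := halt.neg x y
  rw [hB g h x hx y hy, hB h g y hy x hx, ← lie_skew y x, smul_neg] at this
  exact neg_injective this

theorem jacobiator_eq_zero_of_mem (hV : finrank (ZMod 2) V = 3)
    (hgraded : ∀ g h, ∀ x ∈ ℒ g, ∀ y ∈ ℒ h, ⁅x, y⁆ ∈ ℒ (g + h)) (h0 : ℒ 0 = ⊥)
    (hadm : ∀ g : V, ε g g = 0 ∧ ε 0 g = 0 ∧ ε g 0 = 0)
    (hB : ∀ g h, ∀ x ∈ ℒ g, ∀ y ∈ ℒ h, B x y = ε g h • ⁅x, y⁆)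
    (hsym : ∀ g h : V, ε g h = ε h g)
    (hcocycle : ∀ g h k : V, AddSubgroup.closure {g, h, k} = ⊤ →
      ε g (h + k) * ε h k = ε k (g + h) * ε g h)
    {g h k : V} {x y z : L} (hx : x ∈ ℒ g) (hy : y ∈ ℒ h) (hz : z ∈ ℒ k) :
    jacobiator B x y z = 0 := by
  rw [jacobiator_eq hgraded hB hx hy hz]
  rcases closure_eq_top_or hV g h k with hgen | rfl | rfl | rfl | rfl | rfl | rfl | hsum
  · have hgen' : AddSubgroup.closure {h, k, g} = ⊤ := by rwa [Set.pair_comm, Set.insert_comm]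
    rw [hcocycle h k g hgen', hcocycle g h k hgen]
    simp
  · simp [hadm]
  · simp [hadm]
  · simp [hadm]
  · have hY : ⁅y, ⁅z, x⁆⁆ = -⁅x, ⁅y, z⁆⁆ := by
      have := lie_jacobi x y z
      rw [lie_eq_zero_of_mem_same hgraded h0 hx hy, lie_zero, add_zero] at this
      exact eq_neg_of_add_eq_zero_right this
    rw [hY, hsym k g, add_comm k g, (hadm g).1, mul_zero, sub_zero, smul_neg, add_neg_cancel]
  · rw [lie_eq_zero_of_mem_same hgraded h0 hy hz, hsym h g, add_comm h g]
    simp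
  · rw [lie_eq_zero_of_mem_same hgraded h0 hz hx, hsym h k, add_comm h k]
    simp
  · obtain rfl : k = g + h := by rw [eq_neg_of_add_eq_zero_right hsum, ZModModule.neg_eq_self]
    have hg : h + (g + h) = g := by rw [add_left_comm, ZModModule.add_self, add_zero]
    have hh : g + h + g = h := by rw [add_right_comm, ZModModule.add_self, zero_add]
    simp [hg, hh, hadm]

end RankThree

theorem graded_contraction_criterion_admissible
    (F : Type*) [Field F] (L : Type*) [LieRing L] [LieAlgebra F L]
    (ℒ : (Fin 3 → ZMod 2) → Submodule F L) (hdecomp : DirectSum.IsInternal ℒ)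
    (hgraded : ∀ g h, ∀ x ∈ ℒ g, ∀ y ∈ ℒ h, ⁅x, y⁆ ∈ ℒ (g + h))
    (h0 : ℒ 0 = ⊥)
    (hindep : ∀ g h k : Fin 3 → ZMod 2,
      AddSubgroup.closure ({g, h, k} : Set (Fin 3 → ZMod 2)) = ⊤ →
      ∃ x ∈ ℒ g, ∃ y ∈ ℒ h, ∃ z ∈ ℒ k,
        LinearIndependent F ![⁅x, ⁅y, z⁆⁆, ⁅y, ⁅z, x⁆⁆])
    (ε : (Fin 3 → ZMod 2) → (Fin 3 → ZMod 2) → F)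
    (hadm : ∀ g : Fin 3 → ZMod 2, ε g g = 0 ∧ ε 0 g = 0 ∧ ε g 0 = 0)
    (B : L →ₗ[F] L →ₗ[F] L)
    (hB : ∀ g h, ∀ x ∈ ℒ g, ∀ y ∈ ℒ h, B x y = ε g h • ⁅x, y⁆) :
    ((∀ x : L, B x x = 0) ∧
        ∀ x y z : L, B x (B y z) + B y (B z x) + B z (B x y) = 0)
      ↔ ((∀ g h : Fin 3 → ZMod 2, ε g h = ε h g) ∧
          (∀ g h k : Fin 3 → ZMod 2,
            AddSubgroup.closure ({g, h, k} : Set (Fin 3 → ZMod 2)) = ⊤ →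
            ε g (h + k) * ε h k = ε k (g + h) * ε g h)) := by
  have hV : finrank (ZMod 2) (Fin 3 → ZMod 2) = 3 := finrank_fin_fun (ZMod 2)
  have htop := hdecomp.submodule_iSup_eq_top
  constructor
  · rintro ⟨halt, hjac⟩
    refine ⟨contraction_symm_of_isAlt hV hindep hadm hB halt, fun g h k hgen => ?_⟩
    obtain ⟨x, hx, y, hy, z, hz, hli⟩ := hindep g h k hgen
    have hJ := hjac x y z
    rw [← jacobiator_apply, jacobiator_eq hgraded hB hx hy hz] at hJ
    exact sub_eq_zero.1 (hli.eq_zero_of_pair hJ).1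
  · rintro ⟨hsym, hcocycle⟩
    have hskew : ∀ g h, ∀ x ∈ ℒ g, ∀ y ∈ ℒ h, B x y + B y x = 0 := fun g h x hx y hy => by
      rw [hB g h x hx y hy, hB h g y hy x hx, hsym h g, ← lie_skew y x, smul_neg,
        add_neg_cancel]
    have hJ : jacobiator B = 0 := trilinearMap_eq_zero_of_iSup_eq_top htop
      fun _ _ _ _ hx _ hy _ hz =>
        jacobiator_eq_zero_of_mem hV hgraded h0 hadm hB hsym hcocycle hx hy hz
    refine ⟨isAlt_of_iSup_eq_top htop hskew fun g x hx => ?_, fun x y z => ?_⟩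
    · rw [hB g g x hx x hx, (hadm g).1, zero_smul]
    · simpa using LinearMap.congr_fun (LinearMap.ext_iff₂.1 hJ x y) z

end GGA
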